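/- arXiv:cs/0611019 — 2 statements merged into one kernel-verified Lean document; each statement's English description precedes it below -/
import Mathlib

section
/- Every weakly graphic homogeneous relation of local congruence 2 is modular quotient. -/
/-- `H` is a homogeneous relation: for each `x`, the binary relation
`H x · ·` is an equivalence relation on the elements distinct from `x`. -/
def IsHomRel {X : Type*} (H : X → X → X → Prop) : Prop :=
  (∀ x y, y ≠ x → H x y y) ∧
  (∀ x y z, y ≠ x → z ≠ x → H x y z → H x z y) ∧
  (∀ x y z w, y ≠ x → z ≠ x → w ≠ x → H x y z → H x z w → H x y w)

/-- `M` is a homogeneous module of `H`. -/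
def IsModule {X : Type*} (H : X → X → X → Prop) (M : Set X) : Prop :=
  ∀ m ∈ M, ∀ m' ∈ M, ∀ x ∉ M, H x m m'

/-- Two sets overlap. -/
def Overlap {X : Type*} (A B : Set X) : Prop :=
  (A ∩ B).Nonempty ∧ (A \ B).Nonempty ∧ (B \ A).Nonempty

def WeaklyGraphic {X : Type*} (H : X → X → X → Prop) : Prop :=
  ∀ x y z : X, x ≠ y → x ≠ z → y ≠ z → H y x z → H z x y → H x y z

/-- Each `H_x` has at most two equivalence classes. -/
def LocalCongruenceAtMostTwo {X : Type*} (H : X → X → X → Prop) : Prop :=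
  ∀ x a b c : X, a ≠ x → b ≠ x → c ≠ x → H x a b ∨ H x a c ∨ H x b c

def ModularQuotient {X : Type*} (H : X → X → X → Prop) : Prop :=
  ∀ M : Set X, IsModule H M →
    ∀ x ∈ M, ∀ y ∈ M, ∀ s ∉ M, ∀ t ∉ M, (H x s t ↔ H y s t)

/-!
Let `x, y` lie in a module `M` and `s, t` outside it, so that `H_s(x, y)` and `H_t(x, y)`.
Suppose `H_x(s, t)`. Since `H_y` has at most two classes, two of `s, t, x` are equivalent for `H_y`;
up to swapping `s` and `t` either `H_y(s, t)` already holds or `H_y(x, s)`. In the latter case weak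
graphicity, applied once at each of `s` and `t`, moves the information back and forth between `H_x`
and `H_y`: `H_y(x, s)` gives `H_x(y, s)`, hence `H_x(y, t)`, hence `H_y(x, t)`, and so `H_y(s, t)`.
-/

namespace IsHomRel

variable {X : Type*} {H : X → X → X → Prop}

theorem symm (hH : IsHomRel H) {x y z : X} (hy : y ≠ x) (hz : z ≠ x) (h : H x y z) : H x z y :=
  hH.2.1 x y z hy hz h

theorem trans (hH : IsHomRel H) {x y z w : X} (hy : y ≠ x) (hz : z ≠ x) (hw : w ≠ x)
    (h₁ : H x y z) (h₂ : H x z w) : H x y w :=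
  hH.2.2 x y z w hy hz hw h₁ h₂

end IsHomRel

namespace IsModule

variable {X : Type*} {H : X → X → X → Prop} {M : Set X} {x y s t : X}

theorem rel_of_rel_of_mem_of_rel (hH : IsHomRel H) (hwg : WeaklyGraphic H) (hM : IsModule H M)
    (hx : x ∈ M) (hy : y ∈ M) (hs : s ∉ M) (ht : t ∉ M) (hxy : x ≠ y)
    (hyxs : H y x s) (hxst : H x s t) : H y s t := by
  have hsx := (ne_of_mem_of_not_mem hx hs).symm
  have hsy := (ne_of_mem_of_not_mem hy hs).symm
  have htx := (ne_of_mem_of_not_mem hx ht).symm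
  have hty := (ne_of_mem_of_not_mem hy ht).symm
  have hxys : H x y s := hwg x y s hxy hsx.symm hsy.symm hyxs (hM x hx y hy s hs)
  have hxyt : H x y t := hH.trans hxy.symm hsx htx hxys hxst
  have htyx : H t y x := hH.symm htx.symm hty.symm (hM x hx y hy t ht)
  have hyxt : H y x t := hwg y x t hxy.symm hty.symm htx.symm hxyt htyx
  exact hH.trans hsy hxy hty (hH.symm hxy hsy hyxs) hyxt

theorem rel_of_rel_of_mem (hH : IsHomRel H) (hwg : WeaklyGraphic H)
    (hlc : LocalCongruenceAtMostTwo H) (hM : IsModule H M)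
    (hx : x ∈ M) (hy : y ∈ M) (hs : s ∉ M) (ht : t ∉ M) (hxst : H x s t) : H y s t := by
  obtain rfl | hxy := eq_or_ne x y
  · exact hxst
  have hsx := (ne_of_mem_of_not_mem hx hs).symm
  have hsy := (ne_of_mem_of_not_mem hy hs).symm
  have htx := (ne_of_mem_of_not_mem hx ht).symm
  have hty := (ne_of_mem_of_not_mem hy ht).symm
  rcases hlc y s t x hsy hty hxy with hyst | hysx | hytx
  · exact hyst
  · exact rel_of_rel_of_mem_of_rel hH hwg hM hx hy hs ht hxy (hH.symm hsy hxy hysx) hxst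
  · exact hH.symm hty hsy <| rel_of_rel_of_mem_of_rel hH hwg hM hx hy ht hs hxy
      (hH.symm hty hxy hytx) (hH.symm hsx htx hxst)

end IsModule

theorem stmt_11_general {X : Type*} (H : X → X → X → Prop)
    (hH : IsHomRel H) (hwg : WeaklyGraphic H)
    (hlc : LocalCongruenceAtMostTwo H) : ModularQuotient H :=
  fun _ hM _ hx _ hy _ hs _ ht =>
    ⟨hM.rel_of_rel_of_mem hH hwg hlc hx hy hs ht, hM.rel_of_rel_of_mem hH hwg hlc hy hx hs ht⟩

theorem stmt_11 {X : Type*} [Fintype X] (H : X → X → X → Prop)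
    (hH : IsHomRel H) (hwg : WeaklyGraphic H)
    (hlc : LocalCongruenceAtMostTwo H) : ModularQuotient H :=
  stmt_11_general H hH hwg hlc
end

section
/- The family of homogeneous modules of a good homogeneous relation (one satisfying the modular quotient property) is weakly partitive; in particular, if homogeneous modules A and B overlap then A∖B is a homogeneous module. -/
/-- `H` is good: it satisfies the modular quotient property. -/
def Good {X : Type*} (H : X → X → X → Prop) : Prop :=
  ∀ M : Set X, IsModule H M →
    ∀ x ∈ M, ∀ y ∈ M, ∀ s ∉ M, ∀ t ∉ M, (H x s t ↔ H y s t)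

/-! A point of `A ∩ B` links any element of `A` to any element of `B` by transitivity of
`H x`, so the union of overlapping modules is a module. For `A \ B`, the only outside points
not handled by `A` lie in `A ∩ B`; such a point `x` and a point `b ∈ B \ A` both belong to the
module `B`, so goodness of `B` lets `x` see two elements of `A \ B` exactly as `b` does, and
`b ∉ A` sees them as related. -/

section

variable {X : Type*} {H : X → X → X → Prop} {A B : Set X}

theorem isModule_univ (H : X → X → X → Prop) : IsModule H Set.univ :=
  fun _ _ _ _ x hx => absurd (Set.mem_univ x) hx

theorem IsHomRel.isModule_singleton (hH : IsHomRel H) (a : X) : IsModule H {a} := by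
  rintro _ rfl _ rfl x hx
  exact hH.1 x _ (Ne.symm hx)

theorem IsModule.inter (hA : IsModule H A) (hB : IsModule H B) : IsModule H (A ∩ B) := by
  intro m hm m' hm' x hx
  by_cases hxA : x ∈ A
  · exact hB m hm.2 m' hm'.2 x fun hxB => hx ⟨hxA, hxB⟩
  · exact hA m hm.1 m' hm'.1 x hxA

theorem IsModule.union (hH : IsHomRel H) (hA : IsModule H A) (hB : IsModule H B)
    (hAB : (A ∩ B).Nonempty) : IsModule H (A ∪ B) := by
  obtain ⟨c, hcA, hcB⟩ := hAB
  intro m hm m' hm' x hx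
  have hxA : x ∉ A := fun h => hx (Or.inl h)
  have hxB : x ∉ B := fun h => hx (Or.inr h)
  have hmx : m ≠ x := fun h => hx (h ▸ hm)
  have hm'x : m' ≠ x := fun h => hx (h ▸ hm')
  have hcx : c ≠ x := fun h => hxA (h ▸ hcA)
  rcases hm with hm | hm <;> rcases hm' with hm' | hm'
  · exact hA m hm m' hm' x hxA
  · exact hH.2.2 x m c m' hmx hcx hm'x (hA m hm c hcA x hxA) (hB c hcB m' hm' x hxB)
  · exact hH.2.2 x m c m' hmx hcx hm'x (hB m hm c hcB x hxB) (hA c hcA m' hm' x hxA)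
  · exact hB m hm m' hm' x hxB

theorem IsModule.diff (hgood : Good H) (hA : IsModule H A) (hB : IsModule H B)
    (hBA : (B \ A).Nonempty) : IsModule H (A \ B) := by
  obtain ⟨b, hbB, hbA⟩ := hBA
  intro m hm m' hm' x hx
  by_cases hxA : x ∈ A
  · have hxB : x ∈ B := not_not.mp fun hxB => hx ⟨hxA, hxB⟩
    exact (hgood B hB x hxB b hbB m hm.2 m' hm'.2).mpr (hA m hm.1 m' hm'.1 b hbA)
  · exact hA m hm.1 m' hm'.1 x hxA

end

theorem stmt_18_general {X : Type*} (H : X → X → X → Prop)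
    (hH : IsHomRel H) (hgood : Good H) :
    IsModule H (Set.univ : Set X) ∧
    (∀ x : X, IsModule H {x}) ∧
    ∀ A B : Set X, IsModule H A → IsModule H B → Overlap A B →
      IsModule H (A ∪ B) ∧ IsModule H (A ∩ B) ∧ IsModule H (A \ B) :=
  ⟨isModule_univ H, hH.isModule_singleton, fun _ _ hA hB ⟨hAB, _, hBA⟩ =>
    ⟨hA.union hH hB hAB, hA.inter hB, hA.diff hgood hB hBA⟩⟩

theorem stmt_18 {X : Type*} [Fintype X] (H : X → X → X → Prop)
    (hH : IsHomRel H) (hgood : Good H) :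
    IsModule H (Set.univ : Set X) ∧
    (∀ x : X, IsModule H {x}) ∧
    ∀ A B : Set X, IsModule H A → IsModule H B → Overlap A B →
      IsModule H (A ∪ B) ∧ IsModule H (A ∩ B) ∧ IsModule H (A \ B) :=
  stmt_18_general H hH hgood
end
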